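/- arXiv:2011.07749 — 3 statements merged into one kernel-verified Lean document; each statement's English description precedes it below -/
import Mathlib

section
/- Let f be a smooth real-valued function on a domain of ℍⁿ satisfying f_{αᾱ} = -n·g with g = |∂f|² + e^{(2+p)f} - i f₀, and let G_α = i f_{0α} + g f_α. Then the divergence of G satisfies G_{α,ᾱ} = f_α g_ᾱ - n·i·g₀ - n|g|² + 2n·i·f₀·g, where g₀ = ∂g/∂t and summation over α is understood. -/
noncomputable section

open Complex

/-- The left-invariant vector field `Z_α = ∂/∂z^α + i z̄^α ∂/∂t` on the Heisenberg
group `ℍⁿ = ℂⁿ × ℝ`, acting on complex-valued functions. -/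
def Zc (n : ℕ) (α : Fin n) (f : (Fin n → ℂ) × ℝ → ℂ) (x : (Fin n → ℂ) × ℝ) : ℂ :=
  (1 / 2) * (fderiv ℝ f x (Pi.single α 1, 0) - I * fderiv ℝ f x (Pi.single α I, 0)) +
    I * (starRingEnd ℂ) (x.1 α) * fderiv ℝ f x (0, 1)

/-- The conjugate vector field `Z̄_α = ∂/∂z̄^α - i z^α ∂/∂t` on `ℍⁿ`. -/
def Zb (n : ℕ) (α : Fin n) (f : (Fin n → ℂ) × ℝ → ℂ) (x : (Fin n → ℂ) × ℝ) : ℂ :=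
  (1 / 2) * (fderiv ℝ f x (Pi.single α 1, 0) + I * fderiv ℝ f x (Pi.single α I, 0)) -
    I * (x.1 α) * fderiv ℝ f x (0, 1)

/-- The derivative `f₀ = ∂f/∂t` on `ℍⁿ = ℂⁿ × ℝ`. -/
def Tt (n : ℕ) (f : (Fin n → ℂ) × ℝ → ℂ) (x : (Fin n → ℂ) × ℝ) : ℂ :=
  fderiv ℝ f x (0, 1)
/-- The complexification of a real-valued function on `ℍⁿ`. -/
def Fc (n : ℕ) (f : (Fin n → ℂ) × ℝ → ℝ) : (Fin n → ℂ) × ℝ → ℂ :=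
  fun x => (f x : ℂ)

/-- The auxiliary function `g = |∂f|² + e^{(2+p)f} - i f₀`, where
`|∂f|² = Σ_α f_α f_ᾱ`. -/
def gJL (n : ℕ) (p : ℝ) (f : (Fin n → ℂ) × ℝ → ℝ) (x : (Fin n → ℂ) × ℝ) : ℂ :=
  (∑ α, Zc n α (Fc n f) x * Zb n α (Fc n f) x) +
    (Real.exp ((2 + p) * f x) : ℂ) - I * Tt n (Fc n f) x

/-- The tensor `E_{αβ̄} = f_{αβ̄} + g δ_{αβ̄}`. -/
def Etens (n : ℕ) (p : ℝ) (f : (Fin n → ℂ) × ℝ → ℝ) (α β : Fin n)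
    (x : (Fin n → ℂ) × ℝ) : ℂ :=
  Zb n β (Zc n α (Fc n f)) x + gJL n p f x * (if α = β then 1 else 0)

/-- The vector `E_α = E_{αβ̄} f_β`. -/
def Evec (n : ℕ) (p : ℝ) (f : (Fin n → ℂ) × ℝ → ℝ) (α : Fin n)
    (x : (Fin n → ℂ) × ℝ) : ℂ :=
  ∑ β, Etens n p f α β x * Zc n β (Fc n f) x

/-- The tensor `D_{αβ} = f_{αβ} - 2 f_α f_β`. -/
def Dtens (n : ℕ) (f : (Fin n → ℂ) × ℝ → ℝ) (α β : Fin n)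
    (x : (Fin n → ℂ) × ℝ) : ℂ :=
  Zc n β (Zc n α (Fc n f)) x - 2 * Zc n α (Fc n f) x * Zc n β (Fc n f) x

/-- The vector `D_α = D_{αβ} f_β̄`. -/
def Dvec (n : ℕ) (f : (Fin n → ℂ) × ℝ → ℝ) (α : Fin n)
    (x : (Fin n → ℂ) × ℝ) : ℂ :=
  ∑ β, Dtens n f α β x * Zb n β (Fc n f) x

/-- The vector `G_α = i f_{0α} + g f_α`. -/
def Gvec (n : ℕ) (p : ℝ) (f : (Fin n → ℂ) × ℝ → ℝ) (α : Fin n)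
    (x : (Fin n → ℂ) × ℝ) : ℂ :=
  I * Zc n α (Tt n (Fc n f)) x + gJL n p f x * Zc n α (Fc n f) x

/-! ### Auxiliary lemmas -/

namespace JLaux

open scoped ContDiff

abbrev H (n : ℕ) := (Fin n → ℂ) × ℝ

variable {n : ℕ} {u v : H n → ℂ} {x : H n} {α : Fin n}

lemma Zb_congr (h : u =ᶠ[nhds x] v) : Zb n α u x = Zb n α v x := by
  simp only [Zb, h.fderiv_eq]

lemma Tt_congr (h : u =ᶠ[nhds x] v) : Tt n u x = Tt n v x := by
  simp only [Tt, h.fderiv_eq]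

lemma Zb_add (hu : DifferentiableAt ℝ u x) (hv : DifferentiableAt ℝ v x) :
    Zb n α (fun y => u y + v y) x = Zb n α u x + Zb n α v x := by
  simp only [Zb, fderiv_fun_add hu hv, ContinuousLinearMap.add_apply]; ring

lemma Zb_const_mul (hu : DifferentiableAt ℝ u x) (c : ℂ) :
    Zb n α (fun y => c * u y) x = c * Zb n α u x := by
  simp only [Zb, fderiv_const_mul hu c, ContinuousLinearMap.smul_apply, smul_eq_mul]; ring

lemma Zb_mul (hu : DifferentiableAt ℝ u x) (hv : DifferentiableAt ℝ v x) :
    Zb n α (fun y => u y * v y) x = Zb n α u x * v x + u x * Zb n α v x := by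
  simp only [Zb, fderiv_fun_mul hu hv, ContinuousLinearMap.add_apply,
    ContinuousLinearMap.smul_apply, smul_eq_mul]; ring

lemma Tt_const_mul (hu : DifferentiableAt ℝ u x) (c : ℂ) :
    Tt n (fun y => c * u y) x = c * Tt n u x := by
  simp only [Tt, fderiv_const_mul hu c, ContinuousLinearMap.smul_apply, smul_eq_mul]

lemma Tt_sum {ι : Type*} (s : Finset ι) (w : ι → H n → ℂ)
    (h : ∀ i ∈ s, DifferentiableAt ℝ (w i) x) :
    Tt n (fun y => ∑ i ∈ s, w i y) x = ∑ i ∈ s, Tt n (w i) x := by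
  simp only [Tt, fderiv_fun_sum h, ContinuousLinearMap.coe_sum', Finset.sum_apply]

lemma contDiffOn_fderiv_apply {U : Set (H n)} (hU : IsOpen U)
    (hu : ContDiffOn ℝ ∞ u U) (v : H n) :
    ContDiffOn ℝ ∞ (fun y => fderiv ℝ u y v) U :=
  (hu.fderiv_of_isOpen hU (le_of_eq rfl)).clm_apply contDiffOn_const

def coordC (n : ℕ) (α : Fin n) : H n →L[ℝ] ℂ :=
  ((ContinuousLinearMap.proj α : ((Fin n → ℂ)) →L[ℂ] ℂ).restrictScalars ℝ).comp
    (ContinuousLinearMap.fst ℝ (Fin n → ℂ) ℝ)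

def conjC (n : ℕ) (α : Fin n) : H n →L[ℝ] ℂ :=
  (Complex.conjCLE : ℂ →L[ℝ] ℂ).comp (coordC n α)

lemma contDiffOn_Zc {U : Set (H n)} (hU : IsOpen U) (hu : ContDiffOn ℝ ∞ u U) :
    ContDiffOn ℝ ∞ (Zc n α u) U := by
  have h1 := contDiffOn_fderiv_apply hU hu ((Pi.single α 1 : Fin n → ℂ), (0:ℝ))
  have h2 := contDiffOn_fderiv_apply hU hu ((Pi.single α I : Fin n → ℂ), (0:ℝ))
  have h3 := contDiffOn_fderiv_apply hU hu ((0 : Fin n → ℂ), (1:ℝ))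
  have hc : ContDiffOn ℝ ∞ (fun y : H n => (starRingEnd ℂ) (y.1 α)) U :=
    ((conjC n α).contDiff.contDiffOn : ContDiffOn ℝ ∞ (conjC n α) U)
  exact (contDiffOn_const.mul (h1.sub (contDiffOn_const.mul h2))).add
    ((contDiffOn_const.mul hc).mul h3)

lemma contDiffOn_Zb {U : Set (H n)} (hU : IsOpen U) (hu : ContDiffOn ℝ ∞ u U) :
    ContDiffOn ℝ ∞ (Zb n α u) U := by
  have h1 := contDiffOn_fderiv_apply hU hu ((Pi.single α 1 : Fin n → ℂ), (0:ℝ))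
  have h2 := contDiffOn_fderiv_apply hU hu ((Pi.single α I : Fin n → ℂ), (0:ℝ))
  have h3 := contDiffOn_fderiv_apply hU hu ((0 : Fin n → ℂ), (1:ℝ))
  have hc : ContDiffOn ℝ ∞ (fun y : H n => y.1 α) U :=
    ((coordC n α).contDiff.contDiffOn : ContDiffOn ℝ ∞ (coordC n α) U)
  exact (contDiffOn_const.mul (h1.add (contDiffOn_const.mul h2))).sub
    ((contDiffOn_const.mul hc).mul h3)

lemma contDiffOn_Tt {U : Set (H n)} (hU : IsOpen U) (hu : ContDiffOn ℝ ∞ u U) :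
    ContDiffOn ℝ ∞ (Tt n u) U :=
  contDiffOn_fderiv_apply hU hu ((0 : Fin n → ℂ), (1:ℝ))

lemma fderiv_fderiv_apply (hd : DifferentiableAt ℝ (fderiv ℝ u) x) (v w : H n) :
    fderiv ℝ (fun y => fderiv ℝ u y v) x w = fderiv ℝ (fderiv ℝ u) x w v := by
  rw [fderiv_clm_apply hd (differentiableAt_const v)]
  simp

lemma mix_lemma (hd : DifferentiableAt ℝ (fderiv ℝ u) x)
    (hsym : IsSymmSndFDerivAt ℝ u x) (v : H n) :
    fderiv ℝ (fun y => fderiv ℝ u y v) x (0, 1) = fderiv ℝ (Tt n u) x v := by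
  have h2 : fderiv ℝ (Tt n u) x v = fderiv ℝ (fderiv ℝ u) x v ((0:Fin n → ℂ), (1:ℝ)) := by
    have : Tt n u = fun y => fderiv ℝ u y ((0:Fin n → ℂ), (1:ℝ)) := rfl
    rw [this, fderiv_fderiv_apply hd]
  rw [fderiv_fderiv_apply hd, h2]
  exact hsym _ v

lemma Tt_Zc_comm {U : Set (H n)} (hU : IsOpen U) (hu : ContDiffOn ℝ ∞ u U)
    (hx : x ∈ U) : Tt n (Zc n α u) x = Zc n α (Tt n u) x := by
  have hmem : U ∈ nhds x := hU.mem_nhds hx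
  have hcd : ContDiffAt ℝ ∞ u x := hu.contDiffAt hmem
  have hd2 : DifferentiableAt ℝ (fderiv ℝ u) x :=
    ((hcd.fderiv_right (m := ∞) (by simp)).differentiableAt (by norm_cast))
  have hsym : IsSymmSndFDerivAt ℝ u x := hcd.isSymmSndFDerivAt (by rw [minSmoothness_of_isRCLikeNormedField]; norm_cast)
  have hA : DifferentiableAt ℝ (fun y => fderiv ℝ u y ((Pi.single α 1 : Fin n → ℂ), (0:ℝ))) x :=
    hd2.clm_apply (differentiableAt_const _)
  have hB : DifferentiableAt ℝ (fun y => fderiv ℝ u y ((Pi.single α I : Fin n → ℂ), (0:ℝ))) x :=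
    hd2.clm_apply (differentiableAt_const _)
  have hC : DifferentiableAt ℝ (fun y => fderiv ℝ u y ((0 : Fin n → ℂ), (1:ℝ))) x :=
    hd2.clm_apply (differentiableAt_const _)
  have hcf : HasFDerivAt (fun y : H n => I * (starRingEnd ℂ) (y.1 α))
      (I • conjC n α) x :=
    ((conjC n α).hasFDerivAt (x := x)).const_smul (R := ℂ) I
  have hcf' : DifferentiableAt ℝ (fun y : H n => I * (starRingEnd ℂ) (y.1 α)) x :=
    hcf.differentiableAt
  have e0 : (I • conjC n α) ((0:Fin n → ℂ), (1:ℝ)) = 0 := by simp [conjC, coordC]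
  show fderiv ℝ (fun y => (1/2 : ℂ) * (fderiv ℝ u y ((Pi.single α 1:Fin n → ℂ), (0:ℝ)) -
      I * fderiv ℝ u y ((Pi.single α I:Fin n → ℂ), (0:ℝ))) +
      I * (starRingEnd ℂ) (y.1 α) * fderiv ℝ u y ((0:Fin n → ℂ), (1:ℝ))) x
      ((0:Fin n → ℂ), (1:ℝ)) = _
  rw [fderiv_fun_add ((differentiableAt_const _).fun_mul (hA.fun_sub ((differentiableAt_const I).fun_mul hB)))
        (hcf'.fun_mul hC),
      fderiv_const_mul (hA.fun_sub ((differentiableAt_const I).fun_mul hB)),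
      fderiv_fun_sub hA ((differentiableAt_const I).fun_mul hB), fderiv_const_mul hB,
      fderiv_fun_mul hcf' hC, hcf.fderiv]
  simp only [ContinuousLinearMap.add_apply, ContinuousLinearMap.smul_apply,
    ContinuousLinearMap.sub_apply, ContinuousLinearMap.coe_smul', Pi.smul_apply,
    smul_eq_mul, e0, mul_zero, add_zero]
  rw [mix_lemma hd2 hsym, mix_lemma hd2 hsym, mix_lemma hd2 hsym]
  show _ = (1/2 : ℂ) * (fderiv ℝ (Tt n u) x ((Pi.single α 1:Fin n → ℂ), (0:ℝ)) -
      I * fderiv ℝ (Tt n u) x ((Pi.single α I:Fin n → ℂ), (0:ℝ))) +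
      I * (starRingEnd ℂ) (x.1 α) * fderiv ℝ (Tt n u) x ((0:Fin n → ℂ), (1:ℝ))
  ring

lemma Tt_Zb_comm {U : Set (H n)} (hU : IsOpen U) (hu : ContDiffOn ℝ ∞ u U)
    (hx : x ∈ U) : Tt n (Zb n α u) x = Zb n α (Tt n u) x := by
  have hmem : U ∈ nhds x := hU.mem_nhds hx
  have hcd : ContDiffAt ℝ ∞ u x := hu.contDiffAt hmem
  have hd2 : DifferentiableAt ℝ (fderiv ℝ u) x :=
    ((hcd.fderiv_right (m := ∞) (by simp)).differentiableAt (by norm_cast))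
  have hsym : IsSymmSndFDerivAt ℝ u x := hcd.isSymmSndFDerivAt (by rw [minSmoothness_of_isRCLikeNormedField]; norm_cast)
  have hA : DifferentiableAt ℝ (fun y => fderiv ℝ u y ((Pi.single α 1 : Fin n → ℂ), (0:ℝ))) x :=
    hd2.clm_apply (differentiableAt_const _)
  have hB : DifferentiableAt ℝ (fun y => fderiv ℝ u y ((Pi.single α I : Fin n → ℂ), (0:ℝ))) x :=
    hd2.clm_apply (differentiableAt_const _)
  have hC : DifferentiableAt ℝ (fun y => fderiv ℝ u y ((0 : Fin n → ℂ), (1:ℝ))) x :=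
    hd2.clm_apply (differentiableAt_const _)
  have hcf : HasFDerivAt (fun y : H n => I * (y.1 α)) (I • coordC n α) x :=
    ((coordC n α).hasFDerivAt (x := x)).const_smul (R := ℂ) I
  have hcf' : DifferentiableAt ℝ (fun y : H n => I * (y.1 α)) x := hcf.differentiableAt
  have e0 : (I • coordC n α) ((0:Fin n → ℂ), (1:ℝ)) = 0 := by simp [coordC]
  show fderiv ℝ (fun y => (1/2 : ℂ) * (fderiv ℝ u y ((Pi.single α 1:Fin n → ℂ), (0:ℝ)) +
      I * fderiv ℝ u y ((Pi.single α I:Fin n → ℂ), (0:ℝ))) -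
      I * (y.1 α) * fderiv ℝ u y ((0:Fin n → ℂ), (1:ℝ))) x
      ((0:Fin n → ℂ), (1:ℝ)) = _
  rw [fderiv_fun_sub ((differentiableAt_const _).fun_mul (hA.fun_add ((differentiableAt_const I).fun_mul hB)))
        (hcf'.fun_mul hC),
      fderiv_const_mul (hA.fun_add ((differentiableAt_const I).fun_mul hB)),
      fderiv_fun_add hA ((differentiableAt_const I).fun_mul hB), fderiv_const_mul hB,
      fderiv_fun_mul hcf' hC, hcf.fderiv]
  simp only [ContinuousLinearMap.add_apply, ContinuousLinearMap.smul_apply,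
    ContinuousLinearMap.sub_apply, ContinuousLinearMap.coe_smul', Pi.smul_apply,
    smul_eq_mul, e0, mul_zero, add_zero]
  rw [mix_lemma hd2 hsym, mix_lemma hd2 hsym, mix_lemma hd2 hsym]
  show _ = (1/2 : ℂ) * (fderiv ℝ (Tt n u) x ((Pi.single α 1:Fin n → ℂ), (0:ℝ)) +
      I * fderiv ℝ (Tt n u) x ((Pi.single α I:Fin n → ℂ), (0:ℝ))) -
      I * (x.1 α) * fderiv ℝ (Tt n u) x ((0:Fin n → ℂ), (1:ℝ))
  ring

lemma fderiv_Fc_apply {f : H n → ℝ} (hd : DifferentiableAt ℝ f x) (v : H n) :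
    fderiv ℝ (Fc n f) x v = ((fderiv ℝ f x v : ℝ) : ℂ) := by
  have h := (Complex.ofRealCLM.hasFDerivAt.comp x hd.hasFDerivAt).fderiv
  have e : Fc n f = (⇑Complex.ofRealCLM) ∘ f := rfl
  rw [e, h]; rfl

lemma conj_Zc {f : H n → ℝ} (hd : DifferentiableAt ℝ f x) :
    (starRingEnd ℂ) (Zc n α (Fc n f) x) = Zb n α (Fc n f) x := by
  simp only [Zc, Zb, fderiv_Fc_apply hd, map_add, map_mul, map_sub, map_one, map_div₀,
    map_ofNat, conj_I, conj_ofReal, Complex.conj_conj]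
  ring

lemma conj_Zb {f : H n → ℝ} (hd : DifferentiableAt ℝ f x) :
    (starRingEnd ℂ) (Zb n α (Fc n f) x) = Zc n α (Fc n f) x := by
  rw [← conj_Zc hd, Complex.conj_conj]

lemma conj_Tt {f : H n → ℝ} (hd : DifferentiableAt ℝ f x) :
    (starRingEnd ℂ) (Tt n (Fc n f) x) = Tt n (Fc n f) x := by
  simp only [Tt, fderiv_Fc_apply hd, conj_ofReal]

lemma conj_g {p : ℝ} {f : H n → ℝ} (hd : DifferentiableAt ℝ f x) :
    (starRingEnd ℂ) (gJL n p f x) = gJL n p f x + 2 * I * Tt n (Fc n f) x := by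
  simp only [gJL, map_sub, map_add, map_sum, map_mul, conj_Zc hd, conj_Zb hd,
    conj_Tt hd, conj_I, conj_ofReal]
  rw [Finset.sum_congr rfl fun β _ => mul_comm (Zb n β (Fc n f) x) (Zc n β (Fc n f) x)]
  ring

end JLaux

open scoped ContDiff in
open JLaux in
theorem divergence_of_G (n : ℕ) (hn : 1 ≤ n) (p : ℝ)
    (U : Set ((Fin n → ℂ) × ℝ)) (hU : IsOpen U)
    (f : (Fin n → ℂ) × ℝ → ℝ) (hf : ContDiffOn ℝ (⊤ : ℕ∞) f U)
    (hpde : ∀ x ∈ U, ∑ α, Zb n α (Zc n α (Fc n f)) x = -(n : ℂ) * gJL n p f x) :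
    ∀ x ∈ U,
      ∑ α, Zb n α (Gvec n p f α) x =
        (∑ α, Zc n α (Fc n f) x * Zb n α (gJL n p f) x) -
          (n : ℂ) * I * Tt n (gJL n p f) x -
          (n : ℂ) * (gJL n p f x * (starRingEnd ℂ) (gJL n p f x)) +
          2 * (n : ℂ) * I * Tt n (Fc n f) x * gJL n p f x := by
  intro x hx
  have hmem : U ∈ nhds x := hU.mem_nhds hx
  have hf' : ContDiffOn ℝ (∞ : WithTop ℕ∞) f U := hf.of_le (by simp)
  have hFc : ContDiffOn ℝ (∞ : WithTop ℕ∞) (Fc n f) U :=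
    Complex.ofRealCLM.contDiff.comp_contDiffOn hf'
  have da : ∀ {w : JLaux.H n → ℂ}, ContDiffOn ℝ (∞ : WithTop ℕ∞) w U →
      DifferentiableAt ℝ w x := fun h =>
    (h.contDiffAt hmem).differentiableAt (by norm_cast)
  have hdf : DifferentiableAt ℝ f x := (hf'.contDiffAt hmem).differentiableAt (by norm_cast)
  have hTu : ContDiffOn ℝ (∞ : WithTop ℕ∞) (Tt n (Fc n f)) U := contDiffOn_Tt hU hFc
  have hZcu : ∀ β : Fin n, ContDiffOn ℝ (∞ : WithTop ℕ∞) (Zc n β (Fc n f)) U :=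
    fun β => contDiffOn_Zc hU hFc
  have hZbu : ∀ β : Fin n, ContDiffOn ℝ (∞ : WithTop ℕ∞) (Zb n β (Fc n f)) U :=
    fun β => contDiffOn_Zb hU hFc
  have hZcTu : ∀ β : Fin n, ContDiffOn ℝ (∞ : WithTop ℕ∞) (Zc n β (Tt n (Fc n f))) U :=
    fun β => contDiffOn_Zc hU hTu
  have hZbZcu : ∀ β : Fin n, ContDiffOn ℝ (∞ : WithTop ℕ∞) (Zb n β (Zc n β (Fc n f))) U :=
    fun β => contDiffOn_Zb hU (hZcu β)
  have hg : ContDiffOn ℝ (∞ : WithTop ℕ∞) (gJL n p f) U := by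
    have h1 : ContDiffOn ℝ (∞ : WithTop ℕ∞)
        (fun y => ∑ β, Zc n β (Fc n f) y * Zb n β (Fc n f) y) U :=
      ContDiffOn.sum fun β _ => (hZcu β).mul (hZbu β)
    have h2 : ContDiffOn ℝ (∞ : WithTop ℕ∞)
        (fun y : JLaux.H n => ((Real.exp ((2 + p) * f y) : ℝ) : ℂ)) U :=
      Complex.ofRealCLM.contDiff.comp_contDiffOn
        ((Real.contDiff_exp (n := (∞ : WithTop ℕ∞))).comp_contDiffOn
          (contDiffOn_const.mul hf'))
    exact (h1.add h2).sub (contDiffOn_const.mul hTu)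
  -- the key pointwise identity for each β
  have key : ∀ β : Fin n, Zb n β (Gvec n p f β) x =
      I * Tt n (Zb n β (Zc n β (Fc n f))) x +
        (Zc n β (Fc n f) x * Zb n β (gJL n p f) x +
          gJL n p f x * Zb n β (Zc n β (Fc n f)) x) := by
    intro β
    have e1 : Gvec n p f β =
        fun y => I * Zc n β (Tt n (Fc n f)) y + gJL n p f y * Zc n β (Fc n f) y := rfl
    rw [e1, Zb_add ((differentiableAt_const I).fun_mul (da (hZcTu β))) ((da hg).fun_mul (da (hZcu β))),
      Zb_const_mul (da (hZcTu β)) I, Zb_mul (da hg) (da (hZcu β))]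
    have e2 : Zc n β (Tt n (Fc n f)) =ᶠ[nhds x] Tt n (Zc n β (Fc n f)) := by
      filter_upwards [hmem] with y hy
      exact (Tt_Zc_comm hU hFc hy).symm
    rw [Zb_congr e2, Tt_Zb_comm hU (hZcu β) hx]
    ring
  rw [Finset.sum_congr rfl fun β _ => key β, Finset.sum_add_distrib, Finset.sum_add_distrib,
    ← Finset.mul_sum, ← Finset.mul_sum]
  have hsum1 : (∑ β, Tt n (Zb n β (Zc n β (Fc n f))) x) = -(n : ℂ) * Tt n (gJL n p f) x := by
    rw [← Tt_sum Finset.univ _ (fun β _ => da (hZbZcu β))]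
    have ev : (fun y => ∑ β, Zb n β (Zc n β (Fc n f)) y) =ᶠ[nhds x]
        (fun y => -(n : ℂ) * gJL n p f y) := by
      filter_upwards [hmem] with y hy
      exact hpde y hy
    rw [Tt_congr ev, Tt_const_mul (da hg)]
  rw [hsum1, hpde x hx, conj_g hdf]
  ring
end
end

section
/- Let f be a smooth real-valued function on a domain of ℍⁿ satisfying f_{αᾱ} = -n·g with g = |∂f|² + e^{(2+p)f} - i f₀, and let E_{αβ̄} = f_{αβ̄} + g δ_{αβ̄}, E_α = E_{αβ̄} f_β. Then E_{α,ᾱ} = |E_{αβ̄}|² + (1-n)·f_α g_ᾱ, where |E_{αβ̄}|² = Σ_{α,β} E_{αβ̄} E_{ᾱβ} and summation over repeated indices is understood. -/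
noncomputable section

open Complex

namespace JL
abbrev Hn (n : ℕ) := (Fin n → ℂ) × ℝ

def Pd {n : ℕ} (v : Hn n) (h : Hn n → ℂ) (x : Hn n) : ℂ := fderiv ℝ h x v
def ea {n : ℕ} (α : Fin n) : Hn n := (Pi.single α 1, 0)
def ia {n : ℕ} (α : Fin n) : Hn n := (Pi.single α I, 0)
def tu {n : ℕ} : Hn n := (0, 1)

variable {n : ℕ} {U : Set (Hn n)} {h k : Hn n → ℂ} {x v : Hn n}

theorem zc_eq (α : Fin n) (h : Hn n → ℂ) (x : Hn n) :
    Zc n α h x = (1 / 2) * (Pd (ea α) h x - I * Pd (ia α) h x) +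
      I * (starRingEnd ℂ) (x.1 α) * Pd tu h x := rfl

theorem zb_eq (α : Fin n) (h : Hn n → ℂ) (x : Hn n) :
    Zb n α h x = (1 / 2) * (Pd (ea α) h x + I * Pd (ia α) h x) -
      I * (x.1 α) * Pd tu h x := rfl

theorem zc_fun_eq (α : Fin n) (h : Hn n → ℂ) :
    Zc n α h = fun y => (1 / 2) * (Pd (ea α) h y - I * Pd (ia α) h y) +
      I * (starRingEnd ℂ) (y.1 α) * Pd tu h y := rfl

theorem zb_fun_eq (α : Fin n) (h : Hn n → ℂ) :
    Zb n α h = fun y => (1 / 2) * (Pd (ea α) h y + I * Pd (ia α) h y) -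
      I * (y.1 α) * Pd tu h y := rfl

/-! ### Pd calculus -/

theorem pd_add (hh : DifferentiableAt ℝ h x) (hk : DifferentiableAt ℝ k x) :
    Pd v (fun y => h y + k y) x = Pd v h x + Pd v k x := by
  simp [Pd, fderiv_fun_add hh hk]

theorem pd_sub (hh : DifferentiableAt ℝ h x) (hk : DifferentiableAt ℝ k x) :
    Pd v (fun y => h y - k y) x = Pd v h x - Pd v k x := by
  simp [Pd, fderiv_fun_sub hh hk]

theorem pd_mul (hh : DifferentiableAt ℝ h x) (hk : DifferentiableAt ℝ k x) :
    Pd v (fun y => h y * k y) x = Pd v h x * k x + h x * Pd v k x := by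
  simp [Pd, fderiv_fun_mul hh hk]; ring

theorem pd_const_mul (c : ℂ) (hh : DifferentiableAt ℝ h x) :
    Pd v (fun y => c * h y) x = c * Pd v h x := by
  simp [Pd, fderiv_const_mul hh]

theorem pd_mul_const (c : ℂ) (hh : DifferentiableAt ℝ h x) :
    Pd v (fun y => h y * c) x = Pd v h x * c := by
  rw [show (fun y => h y * c) = fun y => c * h y from funext fun y => mul_comm _ _,
    pd_const_mul c hh, mul_comm]

theorem pd_sum {ι : Type*} (s : Finset ι) (H : ι → Hn n → ℂ)
    (hH : ∀ i ∈ s, DifferentiableAt ℝ (H i) x) :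
    Pd v (fun y => ∑ i ∈ s, H i y) x = ∑ i ∈ s, Pd v (H i) x := by
  simp [Pd, fderiv_fun_sum hH]

theorem pd_conj (hh : DifferentiableAt ℝ h x) :
    Pd v (fun y => (starRingEnd ℂ) (h y)) x = (starRingEnd ℂ) (Pd v h x) := by
  have := (Complex.conjCLE.toContinuousLinearMap.hasFDerivAt (x := h x)).comp x hh.hasFDerivAt
  exact congrFun (congrArg _ this.fderiv) v

def coordCLM (β : Fin n) : Hn n →L[ℝ] ℂ :=
  (ContinuousLinearMap.proj β).comp (ContinuousLinearMap.fst ℝ (Fin n → ℂ) ℝ)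

theorem coordCLM_apply (β : Fin n) (y : Hn n) : coordCLM β y = y.1 β := rfl

theorem diff_coord (β : Fin n) : DifferentiableAt ℝ (fun y : Hn n => y.1 β) x :=
  (coordCLM β).differentiableAt

theorem diff_coord_conj (β : Fin n) :
    DifferentiableAt ℝ (fun y : Hn n => (starRingEnd ℂ) (y.1 β)) x :=
  (Complex.conjCLE.toContinuousLinearMap.comp (coordCLM β)).differentiableAt

theorem pd_coord (β : Fin n) : Pd v (fun y => y.1 β) x = v.1 β := by
  have h1 : (fun y : Hn n => y.1 β) = coordCLM β := rfl
  rw [Pd, h1, ContinuousLinearMap.fderiv]; rfl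

theorem pd_coord_conj (β : Fin n) :
    Pd v (fun y => (starRingEnd ℂ) (y.1 β)) x = (starRingEnd ℂ) (v.1 β) := by
  rw [pd_conj (diff_coord β), pd_coord]

theorem ea_coord (a b : Fin n) : (ea a).1 b = if b = a then 1 else 0 := by
  simp [ea, Pi.single_apply]

theorem ia_coord (a b : Fin n) : (ia a).1 b = if b = a then I else 0 := by
  simp [ia, Pi.single_apply]

theorem tu_coord (b : Fin n) : (tu (n := n)).1 b = 0 := rfl

theorem pd_congr {x : Hn n} (hhk : h =ᶠ[nhds x] k) : Pd v h x = Pd v k x := by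
  rw [Pd, Pd, hhk.fderiv_eq]

/-! ### smoothness -/

theorem sm_pd (hU : IsOpen U) (hh : ContDiffOn ℝ (⊤:ℕ∞) h U) (v : Hn n) :
    ContDiffOn ℝ (⊤:ℕ∞) (Pd v h) U :=
  (hh.fderiv_of_isOpen hU (by simp)).clm_apply contDiffOn_const

theorem sm_diff (hU : IsOpen U) (hh : ContDiffOn ℝ (⊤:ℕ∞) h U) (hx : x ∈ U) :
    DifferentiableAt ℝ h x :=
  (hh.contDiffAt (hU.mem_nhds hx)).differentiableAt (by simp)

theorem sm_zc (hU : IsOpen U) (hh : ContDiffOn ℝ (⊤:ℕ∞) h U) (α : Fin n) :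
    ContDiffOn ℝ (⊤:ℕ∞) (Zc n α h) U := by
  rw [zc_fun_eq]
  exact (contDiffOn_const.mul ((sm_pd hU hh _).sub (contDiffOn_const.mul (sm_pd hU hh _)))).add
    (((contDiffOn_const.mul
      ((Complex.conjCLE.toContinuousLinearMap.comp (coordCLM α)).contDiff.contDiffOn))).mul
      (sm_pd hU hh _))

theorem sm_zb (hU : IsOpen U) (hh : ContDiffOn ℝ (⊤:ℕ∞) h U) (α : Fin n) :
    ContDiffOn ℝ (⊤:ℕ∞) (Zb n α h) U := by
  rw [zb_fun_eq]
  exact (contDiffOn_const.mul ((sm_pd hU hh _).add (contDiffOn_const.mul (sm_pd hU hh _)))).sub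
    ((contDiffOn_const.mul ((coordCLM α).contDiff.contDiffOn)).mul (sm_pd hU hh _))

theorem pd_symm (hU : IsOpen U) (hh : ContDiffOn ℝ (⊤:ℕ∞) h U) (hx : x ∈ U) (v w : Hn n) :
    Pd v (Pd w h) x = Pd w (Pd v h) x := by
  have hsymm : IsSymmSndFDerivAt ℝ h x :=
    (hh.contDiffAt (hU.mem_nhds hx)).isSymmSndFDerivAt (by rw [minSmoothness_of_isRCLikeNormedField]; norm_cast)
  have hsm : ContDiffOn ℝ (⊤:ℕ∞) (fderiv ℝ h) U := hh.fderiv_of_isOpen hU (by simp)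
  have hd : DifferentiableAt ℝ (fderiv ℝ h) x :=
    (hsm.contDiffAt (hU.mem_nhds hx)).differentiableAt (by simp)
  have key : ∀ u v : Hn n, Pd v (Pd u h) x = fderiv ℝ (fderiv ℝ h) x v u := by
    intro u v
    have := ((ContinuousLinearMap.apply ℝ ℂ u).hasFDerivAt).comp x hd.hasFDerivAt
    exact congrFun (congrArg _ this.fderiv) v
  rw [key, key, hsymm v w]

end JL

namespace JL
variable {n : ℕ} {U : Set (Hn n)} {h k : Hn n → ℂ} {x v : Hn n}

theorem pd_const (c : ℂ) : Pd v (fun _ => c) x = (0:ℂ) := by simp [Pd]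

theorem zb_congr {α : Fin n} (hhk : h =ᶠ[nhds x] k) : Zb n α h x = Zb n α k x := by
  simp only [zb_eq, pd_congr hhk]

theorem zc_congr {α : Fin n} (hhk : h =ᶠ[nhds x] k) : Zc n α h x = Zc n α k x := by
  simp only [zc_eq, pd_congr hhk]

theorem zb_add {α : Fin n} (hh : DifferentiableAt ℝ h x) (hk : DifferentiableAt ℝ k x) :
    Zb n α (fun y => h y + k y) x = Zb n α h x + Zb n α k x := by
  simp only [zb_eq, pd_add hh hk]; ring

theorem zb_mul {α : Fin n} (hh : DifferentiableAt ℝ h x) (hk : DifferentiableAt ℝ k x) :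
    Zb n α (fun y => h y * k y) x = Zb n α h x * k x + h x * Zb n α k x := by
  simp only [zb_eq, pd_mul hh hk]; ring

theorem zb_const_mul {α : Fin n} (c : ℂ) (hh : DifferentiableAt ℝ h x) :
    Zb n α (fun y => c * h y) x = c * Zb n α h x := by
  simp only [zb_eq, pd_const_mul c hh]; ring

theorem zb_mul_const {α : Fin n} (c : ℂ) (hh : DifferentiableAt ℝ h x) :
    Zb n α (fun y => h y * c) x = Zb n α h x * c := by
  simp only [zb_eq, pd_mul_const c hh]; ring

theorem zb_const {α : Fin n} (c : ℂ) : Zb n α (fun _ => c) x = 0 := by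
  simp only [zb_eq, pd_const]; ring

theorem zb_sum {α : Fin n} {ι : Type*} (s : Finset ι) (H : ι → Hn n → ℂ)
    (hH : ∀ i ∈ s, DifferentiableAt ℝ (H i) x) :
    Zb n α (fun y => ∑ i ∈ s, H i y) x = ∑ i ∈ s, Zb n α (H i) x := by
  classical
  induction s using Finset.induction_on with
  | empty => simpa using zb_const (n := n) (α := α) (x := x) 0
  | insert a s' hmem ih =>
    have h1 : (fun y => ∑ i ∈ insert a s', H i y) = fun y => H a y + ∑ i ∈ s', H i y :=
      funext fun y => Finset.sum_insert hmem
    rw [h1, zb_add (hH a (Finset.mem_insert_self a s'))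
      (DifferentiableAt.fun_sum fun i hi => hH i (Finset.mem_insert_of_mem hi)),
      ih (fun i hi => hH i (Finset.mem_insert_of_mem hi)), Finset.sum_insert hmem]

theorem zc_conj {α : Fin n} (hk : DifferentiableAt ℝ k x) :
    Zc n α (fun y => (starRingEnd ℂ) (k y)) x = (starRingEnd ℂ) (Zb n α k x) := by
  simp only [zc_eq, zb_eq, pd_conj hk, map_sub, map_add, map_mul, map_div₀, map_one,
    map_ofNat, Complex.conj_I]
  ring

theorem zb_conj {α : Fin n} (hk : DifferentiableAt ℝ k x) :
    Zb n α (fun y => (starRingEnd ℂ) (k y)) x = (starRingEnd ℂ) (Zc n α k x) := by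
  simp only [zc_eq, zb_eq, pd_conj hk, map_sub, map_add, map_mul, map_div₀, map_one,
    map_ofNat, Complex.conj_I, Complex.conj_conj]
  ring

/-! ### first derivatives of Z-fields -/

theorem pd_zb (hU : IsOpen U) (hh : ContDiffOn ℝ (⊤:ℕ∞) h U) (hx : x ∈ U)
    (v : Hn n) (β : Fin n) :
    Pd v (Zb n β h) x = (1/2) * (Pd v (Pd (ea β) h) x + I * Pd v (Pd (ia β) h) x)
      - I * (v.1 β) * Pd tu h x - I * (x.1 β) * Pd v (Pd tu h) x := by
  have d1 : DifferentiableAt ℝ (Pd (ea β) h) x := sm_diff hU (sm_pd hU hh _) hx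
  have d2 : DifferentiableAt ℝ (Pd (ia β) h) x := sm_diff hU (sm_pd hU hh _) hx
  have d3 : DifferentiableAt ℝ (Pd tu h) x := sm_diff hU (sm_pd hU hh _) hx
  have dco : DifferentiableAt ℝ (fun y : Hn n => I * y.1 β) x :=
    (diff_coord β).const_mul I
  rw [zb_fun_eq,
    pd_sub (((d1.fun_add (d2.const_mul I)).const_mul _)) (dco.fun_mul d3),
    pd_const_mul _ (d1.fun_add (d2.const_mul I)), pd_add d1 (d2.const_mul I),
    pd_const_mul I d2, pd_mul dco d3, pd_const_mul I (diff_coord β), pd_coord]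
  ring

theorem pd_zc (hU : IsOpen U) (hh : ContDiffOn ℝ (⊤:ℕ∞) h U) (hx : x ∈ U)
    (v : Hn n) (α : Fin n) :
    Pd v (Zc n α h) x = (1/2) * (Pd v (Pd (ea α) h) x - I * Pd v (Pd (ia α) h) x)
      + I * (starRingEnd ℂ) (v.1 α) * Pd tu h x
      + I * (starRingEnd ℂ) (x.1 α) * Pd v (Pd tu h) x := by
  have d1 : DifferentiableAt ℝ (Pd (ea α) h) x := sm_diff hU (sm_pd hU hh _) hx
  have d2 : DifferentiableAt ℝ (Pd (ia α) h) x := sm_diff hU (sm_pd hU hh _) hx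
  have d3 : DifferentiableAt ℝ (Pd tu h) x := sm_diff hU (sm_pd hU hh _) hx
  have dco : DifferentiableAt ℝ (fun y : Hn n => I * (starRingEnd ℂ) (y.1 α)) x :=
    (diff_coord_conj α).const_mul I
  rw [zc_fun_eq,
    pd_add (((d1.fun_sub (d2.const_mul I)).const_mul _)) (dco.fun_mul d3),
    pd_const_mul _ (d1.fun_sub (d2.const_mul I)), pd_sub d1 (d2.const_mul I),
    pd_const_mul I d2, pd_mul dco d3, pd_const_mul I (diff_coord_conj α), pd_coord_conj]
  ring

/-! ### commutators -/

theorem zb_zb_comm (hU : IsOpen U) (hh : ContDiffOn ℝ (⊤:ℕ∞) h U) (hx : x ∈ U)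
    (a b : Fin n) :
    Zb n a (Zb n b h) x = Zb n b (Zb n a h) x := by
  rcases eq_or_ne a b with rfl | hab
  · rfl
  · rw [zb_eq a (Zb n b h), zb_eq b (Zb n a h),
      pd_zb hU hh hx (ea a) b, pd_zb hU hh hx (ia a) b, pd_zb hU hh hx tu b,
      pd_zb hU hh hx (ea b) a, pd_zb hU hh hx (ia b) a, pd_zb hU hh hx tu a]
    simp only [ea_coord, ia_coord, tu_coord, if_neg hab, if_neg (Ne.symm hab)]
    rw [pd_symm hU hh hx (ea b) (ea a), pd_symm hU hh hx (ea b) (ia a),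
      pd_symm hU hh hx (ia b) (ea a), pd_symm hU hh hx (ia b) (ia a),
      pd_symm hU hh hx tu (ea a), pd_symm hU hh hx tu (ia a),
      pd_symm hU hh hx tu (ea b), pd_symm hU hh hx tu (ia b)]
    ring

theorem zb_zc_comm (hU : IsOpen U) (hh : ContDiffOn ℝ (⊤:ℕ∞) h U) (hx : x ∈ U)
    (a b : Fin n) :
    Zb n b (Zc n a h) x = Zc n a (Zb n b h) x
      + 2 * I * (if a = b then 1 else 0) * Pd tu h x := by
  rw [zb_eq b (Zc n a h), zc_eq a (Zb n b h),
    pd_zc hU hh hx (ea b) a, pd_zc hU hh hx (ia b) a, pd_zc hU hh hx tu a,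
    pd_zb hU hh hx (ea a) b, pd_zb hU hh hx (ia a) b, pd_zb hU hh hx tu b]
  rcases eq_or_ne a b with rfl | hab
  · simp only [ea_coord, ia_coord, tu_coord, eq_self_iff_true, if_true,
      map_one, map_zero, Complex.conj_I]
    rw [pd_symm hU hh hx (ia a) (ea a),
      pd_symm hU hh hx tu (ea a), pd_symm hU hh hx tu (ia a)]
    linear_combination (-I * Pd tu h x) * Complex.I_sq
  · simp only [ea_coord, ia_coord, tu_coord, if_neg hab, if_neg (Ne.symm hab), map_zero]
    rw [pd_symm hU hh hx (ea b) (ea a), pd_symm hU hh hx (ea b) (ia a),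
      pd_symm hU hh hx (ia b) (ea a), pd_symm hU hh hx (ia b) (ia a),
      pd_symm hU hh hx tu (ea a), pd_symm hU hh hx tu (ia a),
      pd_symm hU hh hx tu (ea b), pd_symm hU hh hx tu (ia b)]
    ring

end JL

open JL in
theorem divergence_of_E (n : ℕ) (hn : 1 ≤ n) (p : ℝ)
    (U : Set ((Fin n → ℂ) × ℝ)) (hU : IsOpen U)
    (f : (Fin n → ℂ) × ℝ → ℝ) (hf : ContDiffOn ℝ (⊤ : ℕ∞) f U)
    (hpde : ∀ x ∈ U, ∑ α, Zb n α (Zc n α (Fc n f)) x = -(n : ℂ) * gJL n p f x) :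
    ∀ x ∈ U,
      ∑ α, Zb n α (Evec n p f α) x =
        (∑ α, ∑ β, Etens n p f α β x * (starRingEnd ℂ) (Etens n p f α β x)) +
          (1 - (n : ℂ)) * ∑ α, Zc n α (Fc n f) x * Zb n α (gJL n p f) x := by
  classical
  intro x hx
  -- smoothness facts
  have smf : ContDiffOn ℝ (⊤:ℕ∞) f U := hf.of_le (by simp)
  have smF : ContDiffOn ℝ (⊤:ℕ∞) (Fc n f) U :=
    Complex.ofRealCLM.contDiff.comp_contDiffOn smf
  have smZcF : ∀ b : Fin n, ContDiffOn ℝ (⊤:ℕ∞) (Zc n b (Fc n f)) U :=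
    fun b => sm_zc hU smF b
  have smZbF : ∀ b : Fin n, ContDiffOn ℝ (⊤:ℕ∞) (Zb n b (Fc n f)) U :=
    fun b => sm_zb hU smF b
  have smZbZcF : ∀ a b : Fin n, ContDiffOn ℝ (⊤:ℕ∞) (Zb n b (Zc n a (Fc n f))) U :=
    fun a b => sm_zb hU (smZcF a) b
  have smexp : ContDiffOn ℝ (⊤:ℕ∞) (fun y : Hn n => ((Real.exp ((2+p) * f y) : ℝ) : ℂ)) U :=
    Complex.ofRealCLM.contDiff.comp_contDiffOn
      ((Real.contDiff_exp.of_le le_top).comp_contDiffOn (contDiffOn_const.mul smf))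
  have smg : ContDiffOn ℝ (⊤:ℕ∞) (gJL n p f) U := by
    have hgfun : gJL n p f = fun y => (∑ a, Zc n a (Fc n f) y * Zb n a (Fc n f) y)
        + ((Real.exp ((2+p) * f y) : ℝ) : ℂ) - I * Pd tu (Fc n f) y := rfl
    rw [hgfun]
    exact ((ContDiffOn.sum fun a _ => (smZcF a).mul (smZbF a)).add smexp).sub
      (contDiffOn_const.mul (sm_pd hU smF tu))
  have smE : ∀ a b : Fin n, ContDiffOn ℝ (⊤:ℕ∞) (Etens n p f a b) U := by
    intro a b
    have hefun : Etens n p f a b = fun y => Zb n b (Zc n a (Fc n f)) y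
        + gJL n p f y * (if a = b then 1 else 0) := rfl
    rw [hefun]
    exact (smZbZcF a b).add (smg.mul contDiffOn_const)
  -- conjugation facts
  have hconjF : (fun y => (starRingEnd ℂ) (Fc n f y)) = Fc n f :=
    funext fun y => Complex.conj_ofReal (f y)
  have c1 : ∀ (a : Fin n), ∀ y ∈ U, (starRingEnd ℂ) (Zc n a (Fc n f) y) = Zb n a (Fc n f) y := by
    intro a y hy
    have h0 := zb_conj (α := a) (x := y) (sm_diff hU smF hy)
    rw [hconjF] at h0
    exact h0.symm
  have c2 : ∀ (a : Fin n), ∀ y ∈ U, (starRingEnd ℂ) (Zb n a (Fc n f) y) = Zc n a (Fc n f) y := by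
    intro a y hy
    have h0 := zc_conj (α := a) (x := y) (sm_diff hU smF hy)
    rw [hconjF] at h0
    exact h0.symm
  have c3 : ∀ y ∈ U, (starRingEnd ℂ) (Pd tu (Fc n f) y) = Pd tu (Fc n f) y := by
    intro y hy
    have h0 := pd_conj (v := tu) (x := y) (sm_diff hU smF hy)
    rw [hconjF] at h0
    exact h0.symm
  have conjg : ∀ y ∈ U, (starRingEnd ℂ) (gJL n p f y) = gJL n p f y + 2 * I * Pd tu (Fc n f) y := by
    intro y hy
    have hg : gJL n p f y = (∑ a, Zc n a (Fc n f) y * Zb n a (Fc n f) y)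
        + ((Real.exp ((2+p) * f y) : ℝ) : ℂ) - I * Pd tu (Fc n f) y := rfl
    have hA : (starRingEnd ℂ) (∑ a, Zc n a (Fc n f) y * Zb n a (Fc n f) y)
        = ∑ a, Zc n a (Fc n f) y * Zb n a (Fc n f) y := by
      rw [map_sum]
      exact Finset.sum_congr rfl fun a _ => by rw [map_mul, c1 a y hy, c2 a y hy, mul_comm]
    rw [hg]
    simp only [map_sub, map_add, map_mul, Complex.conj_I, Complex.conj_ofReal, hA, c3 y hy]
    ring
  have dg : DifferentiableAt ℝ (gJL n p f) x := sm_diff hU smg hx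
  -- step 1 : expand the divergence of E_α
  have step1 : ∀ a : Fin n, Zb n a (Evec n p f a) x
      = ∑ b, (Zb n a (Etens n p f a b) x * Zc n b (Fc n f) x
          + Etens n p f a b x * Zb n a (Zc n b (Fc n f)) x) := by
    intro a
    have hev : Evec n p f a = fun y => ∑ b, Etens n p f a b y * Zc n b (Fc n f) y := rfl
    rw [hev, zb_sum Finset.univ (fun b y => Etens n p f a b y * Zc n b (Fc n f) y)
      (fun b _ => (sm_diff hU (smE a b) hx).mul (sm_diff hU (smZcF b) hx))]
    exact Finset.sum_congr rfl fun b _ =>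
      zb_mul (sm_diff hU (smE a b) hx) (sm_diff hU (smZcF b) hx)
  -- step 2 : derivative of E_{αβ̄}
  have step2 : ∀ a b : Fin n, Zb n a (Etens n p f a b) x
      = Zb n a (Zb n b (Zc n a (Fc n f))) x + (if a = b then 1 else 0) * Zb n a (gJL n p f) x := by
    intro a b
    have hefun : Etens n p f a b = fun y => Zb n b (Zc n a (Fc n f)) y
        + gJL n p f y * (if a = b then 1 else 0) := rfl
    rw [hefun, zb_add (sm_diff hU (smZbZcF a b) hx) (dg.mul_const _),
      zb_mul_const _ dg]
    ring
  -- step 3 : contracted third derivative via the PDE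
  have step3 : ∀ b : Fin n, ∑ a, Zb n a (Zb n b (Zc n a (Fc n f))) x
      = -(n:ℂ) * Zb n b (gJL n p f) x := by
    intro b
    have e1 : ∀ a : Fin n, Zb n a (Zb n b (Zc n a (Fc n f))) x
        = Zb n b (Zb n a (Zc n a (Fc n f))) x := fun a => zb_zb_comm hU (smZcF a) hx a b
    calc ∑ a, Zb n a (Zb n b (Zc n a (Fc n f))) x
        = ∑ a, Zb n b (Zb n a (Zc n a (Fc n f))) x := Finset.sum_congr rfl fun a _ => e1 a
      _ = Zb n b (fun y => ∑ a, Zb n a (Zc n a (Fc n f)) y) x := by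
          rw [zb_sum Finset.univ (fun a y => Zb n a (Zc n a (Fc n f)) y)
            (fun a _ => sm_diff hU (sm_zb hU (smZcF a) a) hx)]
      _ = Zb n b (fun y => -(n:ℂ) * gJL n p f y) x := by
          refine zb_congr ?_
          filter_upwards [hU.mem_nhds hx] with y hy using hpde y hy
      _ = -(n:ℂ) * Zb n b (gJL n p f) x := zb_const_mul _ dg
  -- step 4 : Σ_α Z̄_α E_{αβ̄} = (1-n) ḡ_β
  have step4 : ∀ b : Fin n, ∑ a, Zb n a (Etens n p f a b) x
      = (1 - (n:ℂ)) * Zb n b (gJL n p f) x := by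
    intro b
    calc ∑ a, Zb n a (Etens n p f a b) x
        = ∑ a, (Zb n a (Zb n b (Zc n a (Fc n f))) x
            + (if a = b then 1 else 0) * Zb n a (gJL n p f) x) :=
          Finset.sum_congr rfl fun a _ => step2 a b
      _ = (∑ a, Zb n a (Zb n b (Zc n a (Fc n f))) x) + Zb n b (gJL n p f) x := by
          rw [Finset.sum_add_distrib]
          congr 1
          simp
      _ = (1 - (n:ℂ)) * Zb n b (gJL n p f) x := by rw [step3 b]; ring
  -- conjugate of E
  have conjE : ∀ a b : Fin n, (starRingEnd ℂ) (Etens n p f a b x)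
      = Zc n b (Zb n a (Fc n f)) x
        + (starRingEnd ℂ) (gJL n p f x) * (if a = b then 1 else 0) := by
    intro a b
    have het : Etens n p f a b x = Zb n b (Zc n a (Fc n f)) x
        + gJL n p f x * (if a = b then 1 else 0) := rfl
    have h1 : (starRingEnd ℂ) (Zb n b (Zc n a (Fc n f)) x) = Zc n b (Zb n a (Fc n f)) x := by
      rw [← zc_conj (α := b) (x := x) (sm_diff hU (smZcF a) hx)]
      refine zc_congr ?_
      filter_upwards [hU.mem_nhds hx] with y hy using c1 a y hy
    rw [het, map_add, map_mul, h1]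
    congr 1
    rcases eq_or_ne a b with rfl | hab
    · simp
    · simp [hab]
  -- key pointwise identity : Z̄_α Z_β f = conj E_{αβ̄} − g δ_{αβ}
  have key : ∀ a b : Fin n, Zb n a (Zc n b (Fc n f)) x
      = (starRingEnd ℂ) (Etens n p f a b x) - gJL n p f x * (if a = b then 1 else 0) := by
    intro a b
    rw [conjE a b, conjg x hx, zb_zc_comm hU smF hx b a]
    rcases eq_or_ne a b with rfl | hab
    · simp; ring
    · simp [hab, Ne.symm hab]
  -- trace-free property of E
  have trace : ∑ a, Etens n p f a a x = 0 := by
    have h1 : ∀ a : Fin n, Etens n p f a a x = Zb n a (Zc n a (Fc n f)) x + gJL n p f x := by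
      intro a; simp [Etens]
    calc ∑ a, Etens n p f a a x
        = ∑ a, (Zb n a (Zc n a (Fc n f)) x + gJL n p f x) :=
          Finset.sum_congr rfl fun a _ => h1 a
      _ = (∑ a, Zb n a (Zc n a (Fc n f)) x) + (n:ℂ) * gJL n p f x := by
          rw [Finset.sum_add_distrib, Finset.sum_const, Finset.card_univ,
            Fintype.card_fin, nsmul_eq_mul]
      _ = 0 := by rw [hpde x hx]; ring
  -- step 5 : the quadratic term
  have step5 : ∑ a, ∑ b, Etens n p f a b x * Zb n a (Zc n b (Fc n f)) x
      = ∑ a, ∑ b, Etens n p f a b x * (starRingEnd ℂ) (Etens n p f a b x) := by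
    have h1 : ∀ a b : Fin n, Etens n p f a b x * Zb n a (Zc n b (Fc n f)) x
        = Etens n p f a b x * (starRingEnd ℂ) (Etens n p f a b x)
          - gJL n p f x * (if a = b then Etens n p f a b x else 0) := by
      intro a b
      rw [key a b]
      rcases eq_or_ne a b with rfl | hab
      · simp; ring
      · simp [hab]
    calc ∑ a, ∑ b, Etens n p f a b x * Zb n a (Zc n b (Fc n f)) x
        = ∑ a, ∑ b, (Etens n p f a b x * (starRingEnd ℂ) (Etens n p f a b x)
            - gJL n p f x * (if a = b then Etens n p f a b x else 0)) :=
          Finset.sum_congr rfl fun a _ => Finset.sum_congr rfl fun b _ => h1 a b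
      _ = (∑ a, ∑ b, Etens n p f a b x * (starRingEnd ℂ) (Etens n p f a b x))
            - gJL n p f x * ∑ a, Etens n p f a a x := by
          simp only [Finset.sum_sub_distrib, ← Finset.mul_sum]
          congr 2
          exact Finset.sum_congr rfl fun a _ => by simp
      _ = ∑ a, ∑ b, Etens n p f a b x * (starRingEnd ℂ) (Etens n p f a b x) := by
          rw [trace]; ring
  -- assembly
  calc ∑ a, Zb n a (Evec n p f a) x
      = ∑ a, ∑ b, (Zb n a (Etens n p f a b) x * Zc n b (Fc n f) x
          + Etens n p f a b x * Zb n a (Zc n b (Fc n f)) x) :=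
        Finset.sum_congr rfl fun a _ => step1 a
    _ = (∑ b, (∑ a, Zb n a (Etens n p f a b) x) * Zc n b (Fc n f) x)
          + ∑ a, ∑ b, Etens n p f a b x * Zb n a (Zc n b (Fc n f)) x := by
        simp only [Finset.sum_add_distrib]
        congr 1
        rw [Finset.sum_comm]
        exact Finset.sum_congr rfl fun b _ => (Finset.sum_mul _ _ _).symm
    _ = (∑ b, ((1 - (n:ℂ)) * Zb n b (gJL n p f) x) * Zc n b (Fc n f) x)
          + ∑ a, ∑ b, Etens n p f a b x * (starRingEnd ℂ) (Etens n p f a b x) := by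
        rw [step5]
        congr 1
        exact Finset.sum_congr rfl fun b _ => by rw [step4 b]
    _ = (∑ a, ∑ b, Etens n p f a b x * (starRingEnd ℂ) (Etens n p f a b x))
          + (1 - (n:ℂ)) * ∑ a, Zc n a (Fc n f) x * Zb n a (gJL n p f) x := by
        rw [Finset.mul_sum]
        rw [add_comm]
        congr 1
        exact Finset.sum_congr rfl fun b _ => by ring
end
end

section
/- Let f be a smooth real-valued function on a domain of ℍⁿ satisfying f_{αᾱ} = -n g with g = |∂f|² + e^{(2+p)f} - i f₀, and G_β = i f_{0β} + g f_β. Then the third derivative satisfies f_{αβᾱ} = 2(n+1)·G_β - n·ḡ_β - 2(n+1)·f_β·g (summation over α). -/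
noncomputable section

open Complex

namespace JL
abbrev H (n : ℕ) := (Fin n → ℂ) × ℝ
variable {n : ℕ} {U : Set (H n)} {x : H n} {h : H n → ℂ}

def ee (n : ℕ) (α : Fin n) : H n := (Pi.single α 1, 0)
def ii (n : ℕ) (α : Fin n) : H n := (Pi.single α I, 0)
def t0 (n : ℕ) : H n := (0, 1)

def D1 (h : H n → ℂ) (v : H n) : H n → ℂ := fun y => fderiv ℝ h y v
def B2 (h : H n → ℂ) (x v w : H n) : ℂ := fderiv ℝ (D1 h v) x w

lemma diffAt (hU : IsOpen U) (hh : ContDiffOn ℝ (⊤ : ℕ∞) h U) (hx : x ∈ U) :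
    DifferentiableAt ℝ h x :=
  (hh.contDiffAt (hU.mem_nhds hx)).differentiableAt (by simp)

lemma contDiffOn_D1 (hU : IsOpen U) (hh : ContDiffOn ℝ (⊤ : ℕ∞) h U) (v : H n) :
    ContDiffOn ℝ (⊤ : ℕ∞) (D1 h v) U :=
  (hh.fderiv_of_isOpen hU (by simp)).clm_apply contDiffOn_const

def Cclm (n : ℕ) (α : Fin n) : H n →L[ℝ] ℂ :=
  (Complex.conjCLE.toContinuousLinearMap).comp
    ((ContinuousLinearMap.proj α).comp (ContinuousLinearMap.fst ℝ (Fin n → ℂ) ℝ))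
def Pclm (n : ℕ) (α : Fin n) : H n →L[ℝ] ℂ :=
  (ContinuousLinearMap.proj α).comp (ContinuousLinearMap.fst ℝ (Fin n → ℂ) ℝ)

lemma B2_symm (hU : IsOpen U) (hh : ContDiffOn ℝ (⊤ : ℕ∞) h U) (hx : x ∈ U) (v w : H n) :
    B2 h x v w = B2 h x w v := by
  have hca : ContDiffAt ℝ (⊤ : ℕ∞) h x := hh.contDiffAt (hU.mem_nhds hx)
  have hdd : DifferentiableAt ℝ (fderiv ℝ h) x :=
    (hca.fderiv_right (m := 1) (WithTop.coe_le_coe.mpr le_top)).differentiableAt one_ne_zero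
  have key : ∀ v w : H n, B2 h x v w = fderiv ℝ (fderiv ℝ h) x w v := by
    intro v w
    rw [B2, show D1 h v = fun y => (fderiv ℝ h y) ((fun _ => v) y) from rfl,
      fderiv_clm_apply hdd (differentiableAt_const v)]
    simp
  have hs := hca.isSymmSndFDerivAt (by rw [minSmoothness_of_isRCLikeNormedField]; exact WithTop.coe_le_coe.mpr le_top)
  rw [key v w, key w v, hs.eq w v]

lemma fderiv_Zc_apply (hU : IsOpen U) (hh : ContDiffOn ℝ (⊤ : ℕ∞) h U) (hx : x ∈ U)
    (α : Fin n) (w : H n) :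
    fderiv ℝ (Zc n α h) x w =
      (1/2) * (B2 h x (ee n α) w - I * B2 h x (ii n α) w)
        + I * (starRingEnd ℂ) (x.1 α) * B2 h x (t0 n) w
        + I * (starRingEnd ℂ) (w.1 α) * D1 h (t0 n) x := by
  have hD : ∀ v : H n, HasFDerivAt (D1 h v) (fderiv ℝ (D1 h v) x) x :=
    fun v => (diffAt hU (contDiffOn_D1 hU hh v) hx).hasFDerivAt
  have hC : HasFDerivAt (fun y : H n => (starRingEnd ℂ) (y.1 α)) (Cclm n α) x :=
    (Cclm n α).hasFDerivAt
  have hmain : HasFDerivAt (Zc n α h)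
      (((1/2 : ℂ) • (fderiv ℝ (D1 h (ee n α)) x - I • fderiv ℝ (D1 h (ii n α)) x))
        + ((I * (starRingEnd ℂ) (x.1 α)) • fderiv ℝ (D1 h (t0 n)) x
            + (D1 h (t0 n) x) • (I • Cclm n α))) x := by
    have h1 : HasFDerivAt (fun y => (1/2 : ℂ) * (D1 h (ee n α) y - I * D1 h (ii n α) y))
        ((1/2 : ℂ) • (fderiv ℝ (D1 h (ee n α)) x - I • fderiv ℝ (D1 h (ii n α)) x)) x :=
      (((hD (ee n α)).sub ((hD (ii n α)).const_mul I)).const_mul (1/2 : ℂ))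
    have h2 : HasFDerivAt (fun y : H n => (I * (starRingEnd ℂ) (y.1 α)) * D1 h (t0 n) y)
        ((I * (starRingEnd ℂ) (x.1 α)) • fderiv ℝ (D1 h (t0 n)) x
          + (D1 h (t0 n) x) • (I • Cclm n α)) x := (hC.const_mul I).mul (hD (t0 n))
    exact h1.add h2
  rw [hmain.fderiv]
  simp only [ContinuousLinearMap.add_apply, ContinuousLinearMap.smul_apply,
    ContinuousLinearMap.sub_apply, smul_eq_mul, B2]
  have : Cclm n α w = (starRingEnd ℂ) (w.1 α) := rfl
  rw [this]; ring

lemma fderiv_Zb_apply (hU : IsOpen U) (hh : ContDiffOn ℝ (⊤ : ℕ∞) h U) (hx : x ∈ U)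
    (α : Fin n) (w : H n) :
    fderiv ℝ (Zb n α h) x w =
      (1/2) * (B2 h x (ee n α) w + I * B2 h x (ii n α) w)
        - I * (x.1 α) * B2 h x (t0 n) w
        - I * (w.1 α) * D1 h (t0 n) x := by
  have hD : ∀ v : H n, HasFDerivAt (D1 h v) (fderiv ℝ (D1 h v) x) x :=
    fun v => (diffAt hU (contDiffOn_D1 hU hh v) hx).hasFDerivAt
  have hC : HasFDerivAt (fun y : H n => y.1 α) (Pclm n α) x := (Pclm n α).hasFDerivAt
  have hmain : HasFDerivAt (Zb n α h)
      (((1/2 : ℂ) • (fderiv ℝ (D1 h (ee n α)) x + I • fderiv ℝ (D1 h (ii n α)) x))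
        - ((I * (x.1 α)) • fderiv ℝ (D1 h (t0 n)) x
            + (D1 h (t0 n) x) • (I • Pclm n α))) x := by
    have h1 : HasFDerivAt (fun y => (1/2 : ℂ) * (D1 h (ee n α) y + I * D1 h (ii n α) y))
        ((1/2 : ℂ) • (fderiv ℝ (D1 h (ee n α)) x + I • fderiv ℝ (D1 h (ii n α)) x)) x :=
      (((hD (ee n α)).add ((hD (ii n α)).const_mul I)).const_mul (1/2 : ℂ))
    have h2 : HasFDerivAt (fun y : H n => (I * (y.1 α)) * D1 h (t0 n) y)
        ((I * (x.1 α)) • fderiv ℝ (D1 h (t0 n)) x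
          + (D1 h (t0 n) x) • (I • Pclm n α)) x := (hC.const_mul I).mul (hD (t0 n))
    exact h1.sub h2
  rw [hmain.fderiv]
  simp only [ContinuousLinearMap.add_apply, ContinuousLinearMap.smul_apply,
    ContinuousLinearMap.sub_apply, smul_eq_mul, B2]
  have : Pclm n α w = w.1 α := rfl
  rw [this]; ring

lemma I_pow3 : I ^ 3 = -I := by rw [pow_succ, Complex.I_sq]; ring

lemma Tt_fun_eq (h : H n → ℂ) : Tt n h = D1 h (t0 n) := rfl

lemma ee_fst (α β : Fin n) : (ee n β).1 α = if α = β then 1 else 0 := by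
  simp [ee, Pi.single_apply]
lemma ii_fst (α β : Fin n) : (ii n β).1 α = if α = β then I else 0 := by
  simp [ii, Pi.single_apply]
lemma t0_fst (α : Fin n) : (t0 n).1 α = 0 := rfl

lemma comm1 (hU : IsOpen U) (hh : ContDiffOn ℝ (⊤ : ℕ∞) h U) (hx : x ∈ U) (α β : Fin n) :
    Zb n β (Zc n α h) x =
      Zc n α (Zb n β h) x + 2 * I * (if α = β then 1 else 0) * Tt n h x := by
  have hs := fun v w => B2_symm hU hh hx v w
  rw [show Zb n β (Zc n α h) x = (1/2) * (fderiv ℝ (Zc n α h) x (ee n β)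
      + I * fderiv ℝ (Zc n α h) x (ii n β)) - I * (x.1 β) * fderiv ℝ (Zc n α h) x (t0 n)
      from rfl,
    show Zc n α (Zb n β h) x = (1/2) * (fderiv ℝ (Zb n β h) x (ee n α)
      - I * fderiv ℝ (Zb n β h) x (ii n α)) + I * (starRingEnd ℂ) (x.1 α) *
        fderiv ℝ (Zb n β h) x (t0 n) from rfl,
    fderiv_Zc_apply hU hh hx α (ee n β), fderiv_Zc_apply hU hh hx α (ii n β),
    fderiv_Zc_apply hU hh hx α (t0 n),
    fderiv_Zb_apply hU hh hx β (ee n α), fderiv_Zb_apply hU hh hx β (ii n α),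
    fderiv_Zb_apply hU hh hx β (t0 n), Tt_fun_eq]
  simp only [ee_fst, ii_fst, t0_fst, apply_ite (starRingEnd ℂ), map_one, map_zero, conj_I,
    map_zero]
  by_cases hab : α = β
  · subst hab
    simp only [if_pos rfl]
    rw [hs (t0 n) (ee n α), hs (t0 n) (ii n α), hs (ii n α) (ee n α)]
    simp only [D1, if_true]
    ring_nf
    simp only [Complex.I_sq, I_pow3]
    ring_nf
  · simp only [if_neg hab, if_neg (Ne.symm hab)]
    rw [hs (t0 n) (ee n α), hs (t0 n) (ii n α), hs (t0 n) (ee n β), hs (t0 n) (ii n β),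
      hs (ee n β) (ee n α), hs (ee n β) (ii n α), hs (ii n β) (ee n α), hs (ii n β) (ii n α)]
    simp only [D1]
    first
    | ring
    | (ring_nf; simp only [Complex.I_sq, I_pow3]; ring)
    | ring_nf

lemma comm2 (hU : IsOpen U) (hh : ContDiffOn ℝ (⊤ : ℕ∞) h U) (hx : x ∈ U) (α β : Fin n) :
    Zc n β (Zc n α h) x = Zc n α (Zc n β h) x := by
  by_cases hab : α = β
  · subst hab; rfl
  have hs := fun v w => B2_symm hU hh hx v w
  rw [show Zc n β (Zc n α h) x = (1/2) * (fderiv ℝ (Zc n α h) x (ee n β)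
      - I * fderiv ℝ (Zc n α h) x (ii n β)) + I * (starRingEnd ℂ) (x.1 β) *
        fderiv ℝ (Zc n α h) x (t0 n) from rfl,
    show Zc n α (Zc n β h) x = (1/2) * (fderiv ℝ (Zc n β h) x (ee n α)
      - I * fderiv ℝ (Zc n β h) x (ii n α)) + I * (starRingEnd ℂ) (x.1 α) *
        fderiv ℝ (Zc n β h) x (t0 n) from rfl,
    fderiv_Zc_apply hU hh hx α (ee n β), fderiv_Zc_apply hU hh hx α (ii n β),
    fderiv_Zc_apply hU hh hx α (t0 n),
    fderiv_Zc_apply hU hh hx β (ee n α), fderiv_Zc_apply hU hh hx β (ii n α),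
    fderiv_Zc_apply hU hh hx β (t0 n)]
  simp only [ee_fst, ii_fst, t0_fst, apply_ite (starRingEnd ℂ), map_one, map_zero, conj_I]
  · simp only [if_neg hab, if_neg (Ne.symm hab)]
    rw [hs (t0 n) (ee n α), hs (t0 n) (ii n α), hs (t0 n) (ee n β), hs (t0 n) (ii n β),
      hs (ee n β) (ee n α), hs (ee n β) (ii n α), hs (ii n β) (ee n α), hs (ii n β) (ii n α)]
    simp only [D1]
    first
    | ring
    | (ring_nf; simp only [Complex.I_sq, I_pow3]; ring_nf)

lemma comm3 (hU : IsOpen U) (hh : ContDiffOn ℝ (⊤ : ℕ∞) h U) (hx : x ∈ U) (β : Fin n) :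
    Tt n (Zc n β h) x = Zc n β (Tt n h) x := by
  have hs := fun v w => B2_symm hU hh hx v w
  rw [show Tt n (Zc n β h) x = fderiv ℝ (Zc n β h) x (t0 n) from rfl,
    show Zc n β (Tt n h) x = (1/2) * (fderiv ℝ (D1 h (t0 n)) x (ee n β)
      - I * fderiv ℝ (D1 h (t0 n)) x (ii n β)) + I * (starRingEnd ℂ) (x.1 β) *
        fderiv ℝ (D1 h (t0 n)) x (t0 n) from rfl,
    fderiv_Zc_apply hU hh hx β (t0 n)]
  simp only [t0_fst, map_zero]
  rw [show fderiv ℝ (D1 h (t0 n)) x (ee n β) = B2 h x (t0 n) (ee n β) from rfl,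
    show fderiv ℝ (D1 h (t0 n)) x (ii n β) = B2 h x (t0 n) (ii n β) from rfl,
    show fderiv ℝ (D1 h (t0 n)) x (t0 n) = B2 h x (t0 n) (t0 n) from rfl,
    hs (t0 n) (ee n β), hs (t0 n) (ii n β)]
  ring

lemma Zc_congr {h₁ h₂ : H n → ℂ} (he : h₁ =ᶠ[nhds x] h₂) (α : Fin n) :
    Zc n α h₁ x = Zc n α h₂ x := by
  unfold Zc; rw [he.fderiv_eq]

lemma Zb_congr {h₁ h₂ : H n → ℂ} (he : h₁ =ᶠ[nhds x] h₂) (α : Fin n) :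
    Zb n α h₁ x = Zb n α h₂ x := by
  unfold Zb; rw [he.fderiv_eq]

lemma Zc_add {a b : H n → ℂ} (ha : DifferentiableAt ℝ a x) (hb : DifferentiableAt ℝ b x)
    (α : Fin n) : Zc n α (fun y => a y + b y) x = Zc n α a x + Zc n α b x := by
  unfold Zc; rw [fderiv_fun_add ha hb]
  simp only [ContinuousLinearMap.add_apply]; ring

lemma Zc_const_mul {a : H n → ℂ} (ha : DifferentiableAt ℝ a x) (c : ℂ) (α : Fin n) :
    Zc n α (fun y => c * a y) x = c * Zc n α a x := by
  unfold Zc; rw [fderiv_const_mul ha c]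
  simp only [ContinuousLinearMap.smul_apply, smul_eq_mul]; ring

lemma Zc_sum {ι : Type*} {s : Finset ι} {F : ι → H n → ℂ}
    (hF : ∀ i ∈ s, DifferentiableAt ℝ (F i) x) (α : Fin n) :
    Zc n α (fun y => ∑ i ∈ s, F i y) x = ∑ i ∈ s, Zc n α (F i) x := by
  unfold Zc; rw [fderiv_fun_sum hF]
  simp only [ContinuousLinearMap.sum_apply, Finset.mul_sum, Finset.sum_sub_distrib,
    Finset.sum_add_distrib]
  congr 1
  rw [← Finset.sum_sub_distrib, Finset.mul_sum]

lemma contDiffOn_Zc (hU : IsOpen U) (hh : ContDiffOn ℝ (⊤ : ℕ∞) h U) (α : Fin n) :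
    ContDiffOn ℝ (⊤ : ℕ∞) (Zc n α h) U := by
  have h1 := contDiffOn_D1 hU hh (ee n α)
  have h2 := contDiffOn_D1 hU hh (ii n α)
  have h3 := contDiffOn_D1 hU hh (t0 n)
  have hc : ContDiffOn ℝ (⊤ : ℕ∞) (fun y : H n => I * (starRingEnd ℂ) (y.1 α)) U :=
    ((Cclm n α).contDiff.const_smul (I : ℂ)).contDiffOn.congr (fun y _ => by
      simp [Cclm, smul_eq_mul])
  exact (contDiffOn_const.mul (h1.sub (contDiffOn_const.mul h2))).add (hc.mul h3)

lemma contDiffOn_Zb (hU : IsOpen U) (hh : ContDiffOn ℝ (⊤ : ℕ∞) h U) (α : Fin n) :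
    ContDiffOn ℝ (⊤ : ℕ∞) (Zb n α h) U := by
  have h1 := contDiffOn_D1 hU hh (ee n α)
  have h2 := contDiffOn_D1 hU hh (ii n α)
  have h3 := contDiffOn_D1 hU hh (t0 n)
  have hc : ContDiffOn ℝ (⊤ : ℕ∞) (fun y : H n => I * (y.1 α)) U :=
    ((Pclm n α).contDiff.const_smul (I : ℂ)).contDiffOn.congr (fun y _ => by
      simp [Pclm, smul_eq_mul])
  exact (contDiffOn_const.mul (h1.add (contDiffOn_const.mul h2))).sub (hc.mul h3)

lemma contDiffOn_Tt (hU : IsOpen U) (hh : ContDiffOn ℝ (⊤ : ℕ∞) h U) :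
    ContDiffOn ℝ (⊤ : ℕ∞) (Tt n h) U := contDiffOn_D1 hU hh (t0 n)

variable {f : H n → ℝ}

lemma contDiffOn_Fc (hf : ContDiffOn ℝ (⊤ : ℕ∞) f U) : ContDiffOn ℝ (⊤ : ℕ∞) (Fc n f) U :=
  Complex.ofRealCLM.contDiff.comp_contDiffOn hf

lemma fderiv_Fc_real (hU : IsOpen U) (hf : ContDiffOn ℝ (⊤ : ℕ∞) f U) (hx : x ∈ U) (v : H n) :
    fderiv ℝ (Fc n f) x v = ((fderiv ℝ f x v : ℝ) : ℂ) := by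
  have hd : DifferentiableAt ℝ f x := (hf.contDiffAt (hU.mem_nhds hx)).differentiableAt (by simp)
  rw [show Fc n f = ⇑Complex.ofRealCLM ∘ f from rfl,
    fderiv_comp x Complex.ofRealCLM.differentiableAt hd, ContinuousLinearMap.fderiv]
  rfl

lemma conj_Zc (hU : IsOpen U) (hf : ContDiffOn ℝ (⊤ : ℕ∞) f U) (hx : x ∈ U) (α : Fin n) :
    (starRingEnd ℂ) (Zc n α (Fc n f) x) = Zb n α (Fc n f) x := by
  unfold Zc Zb
  rw [fderiv_Fc_real hU hf hx (Pi.single α 1, 0), fderiv_Fc_real hU hf hx (Pi.single α I, 0),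
    fderiv_Fc_real hU hf hx (0, 1)]
  simp only [map_add, map_mul, map_sub, map_one, conj_I, Complex.conj_ofReal,
    Complex.conj_conj, map_div₀, map_ofNat]
  ring

lemma conj_Zb (hU : IsOpen U) (hf : ContDiffOn ℝ (⊤ : ℕ∞) f U) (hx : x ∈ U) (α : Fin n) :
    (starRingEnd ℂ) (Zb n α (Fc n f) x) = Zc n α (Fc n f) x := by
  rw [← conj_Zc hU hf hx α, Complex.conj_conj]

lemma conj_Tt (hU : IsOpen U) (hf : ContDiffOn ℝ (⊤ : ℕ∞) f U) (hx : x ∈ U) :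
    (starRingEnd ℂ) (Tt n (Fc n f) x) = Tt n (Fc n f) x := by
  unfold Tt; rw [fderiv_Fc_real hU hf hx (0, 1)]; exact Complex.conj_ofReal _

lemma conj_g (hU : IsOpen U) (hf : ContDiffOn ℝ (⊤ : ℕ∞) f U) (hx : x ∈ U) (p : ℝ) :
    (starRingEnd ℂ) (gJL n p f x) = gJL n p f x + 2 * I * Tt n (Fc n f) x := by
  unfold gJL
  rw [map_sub, map_add, map_sum]
  simp only [map_mul, conj_Zc hU hf hx, conj_Zb hU hf hx, conj_Tt hU hf hx, conj_I,
    Complex.conj_ofReal]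
  have : ∑ α, Zb n α (Fc n f) x * Zc n α (Fc n f) x
      = ∑ α, Zc n α (Fc n f) x * Zb n α (Fc n f) x := by
    exact Finset.sum_congr rfl fun α _ => mul_comm _ _
  rw [this]; ring

lemma contDiffOn_g (hU : IsOpen U) (hf : ContDiffOn ℝ (⊤ : ℕ∞) f U) (p : ℝ) :
    ContDiffOn ℝ (⊤ : ℕ∞) (gJL n p f) U := by
  have hFc : ContDiffOn ℝ (⊤ : ℕ∞) (Fc n f) U := contDiffOn_Fc hf
  have h1 : ContDiffOn ℝ (⊤ : ℕ∞) (fun y => ∑ α, Zc n α (Fc n f) y * Zb n α (Fc n f) y) U := by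
    apply ContDiffOn.sum
    intro α _
    exact (contDiffOn_Zc hU hFc α).mul (contDiffOn_Zb hU hFc α)
  have h2 : ContDiffOn ℝ (⊤ : ℕ∞) (fun y : H n => ((Real.exp ((2 + p) * f y) : ℝ) : ℂ)) U :=
    Complex.ofRealCLM.contDiff.comp_contDiffOn
      (Real.contDiff_exp.comp_contDiffOn (contDiffOn_const.mul hf))
  have h3 : ContDiffOn ℝ (⊤ : ℕ∞) (fun y => I * Tt n (Fc n f) y) U :=
    contDiffOn_const.mul (contDiffOn_Tt hU hFc)
  exact (h1.add h2).sub h3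

end JL

theorem third_derivative_identity (n : ℕ) (hn : 1 ≤ n) (p : ℝ)
    (U : Set ((Fin n → ℂ) × ℝ)) (hU : IsOpen U)
    (f : (Fin n → ℂ) × ℝ → ℝ) (hf : ContDiffOn ℝ (⊤ : ℕ∞) f U)
    (hpde : ∀ x ∈ U, ∑ α, Zb n α (Zc n α (Fc n f)) x = -(n : ℂ) * gJL n p f x) :
    ∀ x ∈ U, ∀ β : Fin n,
      ∑ α, Zb n α (Zc n β (Zc n α (Fc n f))) x =
        2 * ((n : ℂ) + 1) * Gvec n p f β x -
          (n : ℂ) * Zc n β (fun y => (starRingEnd ℂ) (gJL n p f y)) x -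
          2 * ((n : ℂ) + 1) * Zc n β (Fc n f) x * gJL n p f x := by
  intro x hx β
  have hFc : ContDiffOn ℝ (⊤ : ℕ∞) (Fc n f) U := JL.contDiffOn_Fc hf
  have hnx : U ∈ nhds x := hU.mem_nhds hx
  have hTt : ContDiffOn ℝ (⊤ : ℕ∞) (Tt n (Fc n f)) U := JL.contDiffOn_Tt hU hFc
  have hZc : ∀ γ, ContDiffOn ℝ (⊤ : ℕ∞) (Zc n γ (Fc n f)) U := fun γ => JL.contDiffOn_Zc hU hFc γ
  have hZb : ∀ γ, ContDiffOn ℝ (⊤ : ℕ∞) (Zb n γ (Fc n f)) U := fun γ => JL.contDiffOn_Zb hU hFc γ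
  have hZbZc : ∀ a : Fin n, ContDiffOn ℝ (⊤ : ℕ∞) (Zb n a (Zc n a (Fc n f))) U :=
    fun a => JL.contDiffOn_Zb hU (hZc a) a
  have key : ∀ a : Fin n, Zb n a (Zc n β (Zc n a (Fc n f))) x
      = Zc n β (Zb n a (Zc n a (Fc n f))) x
        + 2 * I * (if β = a then 1 else 0) * Zc n a (Tt n (Fc n f)) x := by
    intro a
    have A1 : Zb n a (Zc n β (Zc n a (Fc n f))) x = Zb n a (Zc n a (Zc n β (Fc n f))) x := by
      apply JL.Zb_congr _ a
      filter_upwards [hnx] with y hy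
      exact JL.comm2 hU hFc hy a β
    have A2 : Zb n a (Zc n a (Zc n β (Fc n f))) x
        = Zc n a (Zb n a (Zc n β (Fc n f))) x + 2 * I * Tt n (Zc n β (Fc n f)) x := by
      have := JL.comm1 hU (JL.contDiffOn_Zc hU hFc β) hx a a
      simpa using this
    have A3 : Zc n a (Zb n a (Zc n β (Fc n f))) x
        = Zc n a (Zc n β (Zb n a (Fc n f))) x
          + (2 * I * (if β = a then 1 else 0)) * Zc n a (Tt n (Fc n f)) x := by
      have he : Zb n a (Zc n β (Fc n f)) =ᶠ[nhds x]
          fun y => Zc n β (Zb n a (Fc n f)) y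
            + (2 * I * (if β = a then 1 else 0)) * Tt n (Fc n f) y := by
        filter_upwards [hnx] with y hy
        exact JL.comm1 hU hFc hy β a
      rw [JL.Zc_congr he a,
        JL.Zc_add (JL.diffAt hU (JL.contDiffOn_Zc hU (hZb a) β) hx)
          ((JL.diffAt hU hTt hx).const_mul _) a,
        JL.Zc_const_mul (JL.diffAt hU hTt hx) _ a]
    have A4 : Zc n a (Zc n β (Zb n a (Fc n f))) x = Zc n β (Zc n a (Zb n a (Fc n f))) x :=
      JL.comm2 hU (hZb a) hx β a
    have A5 : Zc n β (Zc n a (Zb n a (Fc n f))) x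
        = Zc n β (Zb n a (Zc n a (Fc n f))) x + (-(2*I)) * Zc n β (Tt n (Fc n f)) x := by
      have he : Zc n a (Zb n a (Fc n f)) =ᶠ[nhds x]
          fun y => Zb n a (Zc n a (Fc n f)) y + (-(2*I)) * Tt n (Fc n f) y := by
        filter_upwards [hnx] with y hy
        have := JL.comm1 hU hFc hy a a
        simp at this
        rw [this]; ring
      rw [JL.Zc_congr he β,
        JL.Zc_add (JL.diffAt hU (hZbZc a) hx) ((JL.diffAt hU hTt hx).const_mul _) β,
        JL.Zc_const_mul (JL.diffAt hU hTt hx) _ β]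
    have A6 : Tt n (Zc n β (Fc n f)) x = Zc n β (Tt n (Fc n f)) x := JL.comm3 hU hFc hx β
    rw [A1, A2, A6, A3, A4, A5]
    ring
  have sum1 : ∑ a, Zb n a (Zc n β (Zc n a (Fc n f))) x
      = (∑ a, Zc n β (Zb n a (Zc n a (Fc n f))) x) + 2 * I * Zc n β (Tt n (Fc n f)) x := by
    rw [Finset.sum_congr rfl (fun a _ => key a), Finset.sum_add_distrib]
    congr 1
    rw [Finset.sum_eq_single β]
    · simp
    · intro b _ hb
      simp [if_neg (Ne.symm hb)]
    · intro hβ; exact absurd (Finset.mem_univ β) hβ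
  have sum2 : ∑ a, Zc n β (Zb n a (Zc n a (Fc n f))) x = -(n:ℂ) * Zc n β (gJL n p f) x := by
    rw [← JL.Zc_sum (fun a _ => JL.diffAt hU (hZbZc a) hx) β]
    have he : (fun y => ∑ a, Zb n a (Zc n a (Fc n f)) y) =ᶠ[nhds x]
        fun y => -(n:ℂ) * gJL n p f y := by
      filter_upwards [hnx] with y hy; exact hpde y hy
    rw [JL.Zc_congr he β, JL.Zc_const_mul (JL.diffAt hU (JL.contDiffOn_g hU hf p) hx) _ β]
  have conjg : Zc n β (fun y => (starRingEnd ℂ) (gJL n p f y)) x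
      = Zc n β (gJL n p f) x + 2 * I * Zc n β (Tt n (Fc n f)) x := by
    have he : (fun y => (starRingEnd ℂ) (gJL n p f y)) =ᶠ[nhds x]
        fun y => gJL n p f y + (2 * I) * Tt n (Fc n f) y := by
      filter_upwards [hnx] with y hy; exact JL.conj_g hU hf hy p
    rw [JL.Zc_congr he β,
      JL.Zc_add (JL.diffAt hU (JL.contDiffOn_g hU hf p) hx)
        ((JL.diffAt hU hTt hx).const_mul _) β,
      JL.Zc_const_mul (JL.diffAt hU hTt hx) _ β]
  rw [sum1, sum2, conjg]
  simp only [Gvec]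
  ring
end
end
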